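/- arXiv:2109.04818 — 6 statements merged into one kernel-verified Lean document; each statement's English description precedes it below -/
import Mathlib

section
/- Let 𝒫 and ℛ be finite measurable partitions of Ξ such that 𝒫 ℙ-refines ℛ. Then for every x ∈ ℝⁿ one has V_ℛ(x) ≤ V_𝒫(x) (as elements of ℝ ∪ {+∞}). -/
open MeasureTheory
open scoped BigOperators Classical

noncomputable section

/-- The space of alea `Ξ = ℝ^{l×n} × ℝ^l`: pairs `ξ = (T, h)`. -/
abbrev Xi (l n : ℕ) := (Fin l → Fin n → ℝ) × (Fin l → ℝ)

/-- The dual admissible polyhedron `D = {λ : Wᵀλ ≤ q}`. -/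
def polyD {l m : ℕ} (W : Fin l → Fin m → ℝ) (q : Fin m → ℝ) : Set (Fin l → ℝ) :=
  {lam | ∀ j, (∑ i, W i j * lam i) ≤ q j}

/-- Recourse cost `Q(x, ξ) = sup_{λ ∈ D} ⟨h - Tx, λ⟩ ∈ ℝ ∪ {+∞}` (as an `EReal`). -/
def Qfun {l n m : ℕ} (W : Fin l → Fin m → ℝ) (q : Fin m → ℝ)
    (x : Fin n → ℝ) (ξ : Xi l n) : EReal :=
  ⨆ lam ∈ polyD W q, ((∑ i, (ξ.2 i - ∑ j, ξ.1 i j * x j) * lam i : ℝ) : EReal)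

/-- A finite measurable partition of `α`, given as a `Finset` of sets. -/
def IsFinPartition {α : Type*} [MeasurableSpace α] (Ps : Finset (Set α)) : Prop :=
  (∀ P ∈ Ps, MeasurableSet P) ∧ ((Ps : Set (Set α)).PairwiseDisjoint id) ∧
    ⋃₀ (Ps : Set (Set α)) = Set.univ

/-- Conditional expectation `E[ξ | ξ ∈ P] = E[ξ 1_{ξ ∈ P}] / ℙ[ξ ∈ P]`. -/
def condMean {Ω : Type*} [MeasurableSpace Ω] {l n : ℕ} (ℙ : Measure Ω)
    (ξ : Ω → Xi l n) (P : Set (Xi l n)) : Xi l n :=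
  (ℙ (ξ ⁻¹' P)).toReal⁻¹ • ∫ ω in ξ ⁻¹' P, ξ ω ∂ℙ

/-- Expected cost-to-go of a partition: `V_Ps(x) = Σ_{P ∈ Ps, ℙ[ξ∈P] > 0} ℙ[ξ∈P] Q(x, E[ξ|P])`. -/
def Vpart {Ω : Type*} [MeasurableSpace Ω] {l n m : ℕ} (W : Fin l → Fin m → ℝ)
    (q : Fin m → ℝ) (ℙ : Measure Ω) (ξ : Ω → Xi l n) (Ps : Finset (Set (Xi l n)))
    (x : Fin n → ℝ) : EReal :=
  ∑ P ∈ Ps, if 0 < ℙ (ξ ⁻¹' P) then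
    ((ℙ (ξ ⁻¹' P)).toReal : EReal) * Qfun W q x (condMean ℙ ξ P) else 0

/-- True expected cost-to-go `V(x) = E[Q(x, ξ)] ∈ ℝ ∪ {+∞}`: the real integral when
`Q(x, ξ)` is integrable (a.e. finite with integrable real part), `+∞` otherwise. -/
def Vtrue {Ω : Type*} [MeasurableSpace Ω] {l n m : ℕ} (W : Fin l → Fin m → ℝ)
    (q : Fin m → ℝ) (ℙ : Measure Ω) (ξ : Ω → Xi l n) (x : Fin n → ℝ) : EReal :=
  if (∀ᵐ ω ∂ℙ, Qfun W q x (ξ ω) ≠ ⊤) ∧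
      Integrable (fun ω => (Qfun W q x (ξ ω)).toReal) ℙ then
    (((∫ ω, (Qfun W q x (ξ ω)).toReal ∂ℙ) : ℝ) : EReal)
  else ⊤

/-- `Ps` ℙ-refines `ℛ`: every `P ∈ Ps` is ℙ-essentially contained in some `R ∈ ℛ`. -/
def PRefines {Ω : Type*} [MeasurableSpace Ω] {l n : ℕ} (ℙ : Measure Ω) (ξ : Ω → Xi l n)
    (Ps ℛ : Finset (Set (Xi l n))) : Prop :=
  ∀ P ∈ Ps, ∃ R ∈ ℛ, ℙ (ξ ⁻¹' (P ∩ R)) = ℙ (ξ ⁻¹' P)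

/-- Conditional expectation `E[Q(x,ξ) | ξ ∈ P] ∈ ℝ ∪ {+∞}`: equal to
`E[Q(x,ξ) 1_{ξ∈P}] / ℙ[ξ∈P]` when `Q(x,ξ) 1_{ξ∈P}` is integrable, `+∞` otherwise. -/
def condQ {Ω : Type*} [MeasurableSpace Ω] {l n m : ℕ} (W : Fin l → Fin m → ℝ)
    (q : Fin m → ℝ) (ℙ : Measure Ω) (ξ : Ω → Xi l n) (x : Fin n → ℝ)
    (P : Set (Xi l n)) : EReal :=
  if (∀ᵐ ω ∂ℙ, ξ ω ∈ P → Qfun W q x (ξ ω) ≠ ⊤) ∧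
      IntegrableOn (fun ω => (Qfun W q x (ξ ω)).toReal) (ξ ⁻¹' P) ℙ then
    (((ℙ (ξ ⁻¹' P)).toReal⁻¹ * ∫ ω in ξ ⁻¹' P, (Qfun W q x (ξ ω)).toReal ∂ℙ : ℝ) : EReal)
  else ⊤

/-- Subdifferential of an `EReal`-valued function at `x`. -/
def SubDiff {n : ℕ} (f : (Fin n → ℝ) → EReal) (x : Fin n → ℝ) : Set (Fin n → ℝ) :=
  {g | ∀ y, f x + ((∑ i, g i * (y i - x i) : ℝ) : EReal) ≤ f y}

/-!
`Q(x, ·)` is the support function of `D` evaluated at `h - T x`, hence sublinear in `ξ`: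
positively homogeneous and subadditive. Homogeneity turns each summand
`ℙ[ξ ∈ P] · Q(x, E[ξ | P])` of `V_𝒫(x)` into `Q(x, E[ξ 1_{ξ ∈ P}])`; this also holds when
`ℙ[ξ ∈ P] = 0`, because `Q(x, 0) = 0` once `D ≠ ∅`. Up to a null set, each `R ∈ ℛ` is the
union of the cells of `𝒫` assigned to it, so `E[ξ 1_{ξ ∈ R}]` is the sum of the corresponding
`E[ξ 1_{ξ ∈ P}]`, and subadditivity of `Q(x, ·)` gives `V_ℛ(x) ≤ V_𝒫(x)`.
-/

def supportFun {ι E : Type*} [AddCommGroup E] [Module ℝ E] (f : ι → E →ₗ[ℝ] ℝ) (s : Set ι)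
    (a : E) : EReal :=
  ⨆ i ∈ s, ((f i a : ℝ) : EReal)

section supportFun

variable {ι E : Type*} [AddCommGroup E] [Module ℝ E] (f : ι → E →ₗ[ℝ] ℝ) (s : Set ι)

theorem le_supportFun {i : ι} (hi : i ∈ s) (a : E) : ((f i a : ℝ) : EReal) ≤ supportFun f s a :=
  le_iSup₂ (f := fun i (_ : i ∈ s) => ((f i a : ℝ) : EReal)) i hi

theorem supportFun_zero_le : supportFun f s 0 ≤ 0 :=
  iSup₂_le fun i _ => by simp

theorem supportFun_zero (hs : s.Nonempty) : supportFun f s 0 = 0 := by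
  obtain ⟨i, hi⟩ := hs
  exact (supportFun_zero_le f s).antisymm (by simpa using le_supportFun f s hi 0)

theorem supportFun_add_le (a b : E) :
    supportFun f s (a + b) ≤ supportFun f s a + supportFun f s b :=
  iSup₂_le fun i hi => by
    rw [map_add, EReal.coe_add]
    exact add_le_add (le_supportFun f s hi a) (le_supportFun f s hi b)

theorem supportFun_sum_le {κ : Type*} (t : Finset κ) (a : κ → E) :
    supportFun f s (∑ k ∈ t, a k) ≤ ∑ k ∈ t, supportFun f s (a k) := by
  classical
  induction t using Finset.induction with
  | empty => simpa using supportFun_zero_le f s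
  | insert k t hk ih =>
    rw [Finset.sum_insert hk, Finset.sum_insert hk]
    exact (supportFun_add_le f s _ _).trans (add_le_add le_rfl ih)

theorem supportFun_smul_le {c : ℝ} (hc : 0 ≤ c) (a : E) :
    supportFun f s (c • a) ≤ c * supportFun f s a :=
  iSup₂_le fun i hi => by
    rw [map_smul, smul_eq_mul, EReal.coe_mul]
    exact mul_le_mul_of_nonneg_left (le_supportFun f s hi a) (EReal.coe_nonneg.mpr hc)

theorem supportFun_smul {c : ℝ} (hc : 0 < c) (a : E) :
    supportFun f s (c • a) = c * supportFun f s a := by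
  refine (supportFun_smul_le f s hc.le a).antisymm ?_
  calc (c : EReal) * supportFun f s a
      = c * supportFun f s (c⁻¹ • c • a) := by rw [inv_smul_smul₀ hc.ne']
    _ ≤ c * (c⁻¹ * supportFun f s (c • a)) :=
        mul_le_mul_of_nonneg_left (supportFun_smul_le f s (inv_nonneg.mpr hc.le) _)
          (EReal.coe_nonneg.mpr hc.le)
    _ = supportFun f s (c • a) := by
        rw [← mul_assoc, ← EReal.coe_mul, mul_inv_cancel₀ hc.ne', EReal.coe_one, one_mul]

end supportFun

def dualObjective {l n : ℕ} (x : Fin n → ℝ) (lam : Fin l → ℝ) : Xi l n →ₗ[ℝ] ℝ where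
  toFun ξ := ∑ i, (ξ.2 i - ∑ j, ξ.1 i j * x j) * lam i
  map_add' a b := by
    rw [← Finset.sum_add_distrib]
    refine Finset.sum_congr rfl fun i _ => ?_
    simp only [Prod.fst_add, Prod.snd_add, Pi.add_apply, add_mul, Finset.sum_add_distrib]
    ring
  map_smul' c a := by
    rw [RingHom.id_apply, smul_eq_mul, Finset.mul_sum]
    refine Finset.sum_congr rfl fun i _ => ?_
    simp only [Prod.smul_fst, Prod.smul_snd, Pi.smul_apply, smul_eq_mul, mul_assoc,
      ← Finset.mul_sum]
    ring

theorem Qfun_eq_supportFun {l n m : ℕ} (W : Fin l → Fin m → ℝ) (q : Fin m → ℝ)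
    (x : Fin n → ℝ) :
    Qfun W q x = supportFun (dualObjective x) (polyD W q) :=
  rfl

section Partition

open Set

variable {α Ω : Type*}

theorem mem_iff_mem_biUnion_fiber {Ps Rs : Finset (Set α)}
    (hPs : ⋃₀ (Ps : Set (Set α)) = univ) (hRs : (Rs : Set (Set α)).PairwiseDisjoint id)
    {r : Set α → Set α} (hr : ∀ P ∈ Ps, r P ∈ Rs) {z : α} (hz : ∀ P ∈ Ps, z ∈ P → z ∈ r P)
    {R : Set α} (hR : R ∈ Rs) :
    z ∈ R ↔ z ∈ ⋃ P ∈ Ps.filter (r · = R), P := by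
  simp only [mem_iUnion, Finset.mem_filter, exists_prop]
  constructor
  · intro hzR
    obtain ⟨P, hP, hzP⟩ : z ∈ ⋃₀ (Ps : Set (Set α)) := hPs ▸ mem_univ z
    refine ⟨P, ⟨hP, ?_⟩, hzP⟩
    by_contra hne
    exact disjoint_left.mp (hRs (hr P hP) hR hne) (hz P hP hzP) hzR
  · rintro ⟨P, ⟨hP, rfl⟩, hzP⟩
    exact hz P hP hzP

variable [MeasurableSpace α] [MeasurableSpace Ω]

theorem ae_imp_of_measure_inter_eq {μ : Measure Ω} [IsFiniteMeasure μ] {s t : Set Ω}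
    (ht : MeasurableSet t) (h : μ (s ∩ t) = μ s) : ∀ᵐ ω ∂μ, ω ∈ s → ω ∈ t := by
  have hsplit := measure_sdiff_add_inter (μ := μ) s ht
  rw [h] at hsplit
  exact (ae_le_set.mpr (by simpa [measure_ne_top] using hsplit) : s ≤ᵐ[μ] t)

theorem setIntegral_preimage_eq_sum_fiber {E : Type*} [NormedAddCommGroup E] [NormedSpace ℝ E]
    {μ : Measure Ω} [IsFiniteMeasure μ] {ξ : Ω → α} (hξ : Measurable ξ) {f : Ω → E}
    (hf : Integrable f μ) {Ps Rs : Finset (Set α)} (hPs : IsFinPartition Ps)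
    (hRs : IsFinPartition Rs) {r : Set α → Set α} (hr : ∀ P ∈ Ps, r P ∈ Rs)
    (hPr : ∀ P ∈ Ps, μ (ξ ⁻¹' (P ∩ r P)) = μ (ξ ⁻¹' P)) {R : Set α} (hR : R ∈ Rs) :
    ∫ ω in ξ ⁻¹' R, f ω ∂μ = ∑ P ∈ Ps.filter (r · = R), ∫ ω in ξ ⁻¹' P, f ω ∂μ := by
  have hae : ∀ᵐ ω ∂μ, ∀ P ∈ Ps, ξ ω ∈ P → ξ ω ∈ r P :=
    (Finset.eventually_all Ps).mpr fun P hP =>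
      ae_imp_of_measure_inter_eq (hξ (hRs.1 _ (hr P hP))) (hPr P hP)
  have hR_ae : ξ ⁻¹' R =ᵐ[μ] ⋃ P ∈ Ps.filter (r · = R), ξ ⁻¹' P := by
    filter_upwards [hae] with ω hω
    rw [← preimage_iUnion₂]
    exact propext (mem_iff_mem_biUnion_fiber hPs.2.2 hRs.2.1 hr hω hR)
  have hdisj : ((Ps.filter (r · = R) : Finset (Set α)) : Set (Set α)).Pairwise
      (Function.onFun Disjoint fun P => ξ ⁻¹' P) := fun P hP P' hP' hne =>
    (hPs.2.1 (Finset.mem_filter.mp hP).1 (Finset.mem_filter.mp hP').1 hne).preimage ξ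
  rw [setIntegral_congr_set hR_ae, integral_biUnion_finset _
    (fun P hP => hξ (hPs.1 P (Finset.mem_filter.mp hP).1)) hdisj fun _ _ => hf.integrableOn]

end Partition

theorem Vpart_eq_sum_Qfun_setIntegral {Ω : Type*} [MeasurableSpace Ω] {l n m : ℕ}
    {W : Fin l → Fin m → ℝ} {q : Fin m → ℝ} (hD : (polyD W q).Nonempty)
    (ℙ : Measure Ω) [IsFiniteMeasure ℙ] (ξ : Ω → Xi l n) (Ps : Finset (Set (Xi l n)))
    (x : Fin n → ℝ) :
    Vpart W q ℙ ξ Ps x = ∑ P ∈ Ps, Qfun W q x (∫ ω in ξ ⁻¹' P, ξ ω ∂ℙ) := by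
  refine Finset.sum_congr rfl fun P _ => ?_
  rw [Qfun_eq_supportFun]
  split_ifs with hpos
  · have hc : 0 < (ℙ (ξ ⁻¹' P)).toReal := ENNReal.toReal_pos hpos.ne' (measure_ne_top _ _)
    rw [condMean, ← supportFun_smul _ _ hc, smul_inv_smul₀ hc.ne']
  · rw [not_lt, nonpos_iff_eq_zero] at hpos
    rw [Measure.restrict_eq_zero.mpr hpos, integral_zero_measure, supportFun_zero _ _ hD]

theorem refinement_increases_partition_value_general
    {Ω : Type*} [MeasurableSpace Ω] {l n m : ℕ}
    (W : Fin l → Fin m → ℝ) (q : Fin m → ℝ) (hD : (polyD W q).Nonempty)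
    (ℙ : Measure Ω) [IsProbabilityMeasure ℙ]
    (ξ : Ω → Xi l n) (hξmeas : Measurable ξ) (hξint : Integrable ξ ℙ)
    (Ps Rs : Finset (Set (Xi l n)))
    (hPs : IsFinPartition Ps) (hRs : IsFinPartition Rs)
    (href : PRefines ℙ ξ Ps Rs) :
    ∀ x : Fin n → ℝ, Vpart W q ℙ ξ Rs x ≤ Vpart W q ℙ ξ Ps x := by
  intro x
  choose! r hr hPr using href
  set σ := supportFun (dualObjective x) (polyD W q)
  rw [Vpart_eq_sum_Qfun_setIntegral hD, Vpart_eq_sum_Qfun_setIntegral hD, Qfun_eq_supportFun]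
  calc ∑ R ∈ Rs, σ (∫ ω in ξ ⁻¹' R, ξ ω ∂ℙ)
      = ∑ R ∈ Rs, σ (∑ P ∈ Ps.filter (r · = R), ∫ ω in ξ ⁻¹' P, ξ ω ∂ℙ) :=
        Finset.sum_congr rfl fun R hR => by
          rw [setIntegral_preimage_eq_sum_fiber hξmeas hξint hPs hRs hr hPr hR]
    _ ≤ ∑ R ∈ Rs, ∑ P ∈ Ps.filter (r · = R), σ (∫ ω in ξ ⁻¹' P, ξ ω ∂ℙ) :=
        Finset.sum_le_sum fun R _ => supportFun_sum_le _ _ _ _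
    _ = ∑ P ∈ Ps, σ (∫ ω in ξ ⁻¹' P, ξ ω ∂ℙ) := Finset.sum_fiberwise_of_maps_to hr _

/-- Lemma 2, Eq. (10): if `Ps` ℙ-refines `Rs` then `V_Rs ≤ V_Ps`. -/
theorem refinement_increases_partition_value
    {Ω : Type*} [MeasurableSpace Ω] {l n m : ℕ}
    (hl : 0 < l) (hn : 0 < n) (hm : 0 < m)
    (W : Fin l → Fin m → ℝ) (q : Fin m → ℝ) (hD : (polyD W q).Nonempty)
    (ℙ : Measure Ω) [IsProbabilityMeasure ℙ]
    (ξ : Ω → Xi l n) (hξmeas : Measurable ξ) (hξint : Integrable ξ ℙ)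
    (Ps Rs : Finset (Set (Xi l n)))
    (hPs : IsFinPartition Ps) (hRs : IsFinPartition Rs)
    (href : PRefines ℙ ξ Ps Rs) :
    ∀ x : Fin n → ℝ, Vpart W q ℙ ξ Rs x ≤ Vpart W q ℙ ξ Ps x :=
  refinement_increases_partition_value_general W q hD ℙ ξ hξmeas hξint Ps Rs hPs hRs href

end
end

section
/- Let 𝒫 be a finite measurable partition of Ξ and x ∈ ℝⁿ such that ω ↦ Q(x, ξ(ω)) is integrable. Then Q(x, E[ξ]) ≤ V_𝒫(x) ≤ V(x), where V(x) := E[Q(x,ξ)]. -/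
open MeasureTheory
open scoped BigOperators Classical

noncomputable section

/-!
`Q(x, ·)` is the supremum over `λ ∈ D` of the linear functionals `ξ ↦ ⟨h - Tx, λ⟩`. Each of them
commutes with conditional means, so for every `λ ∈ D`
`⟨E[h] - E[T] x, λ⟩ = Σ_P ℙ[ξ∈P] ⟨E[h|P] - E[T|P] x, λ⟩ ≤ V_𝒫(x)`.
Each is also dominated by `Q(x, ξ)` pointwise, so on every cell
`ℙ[ξ∈P] Q(x, E[ξ|P]) ≤ E[Q(x, ξ) 1_{ξ∈P}]` (Jensen), and summing over the cells gives `V_𝒫 ≤ V`.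
-/

theorem EReal.coe_finset_sum {α : Type*} (s : Finset α) (f : α → ℝ) :
    ((∑ a ∈ s, f a : ℝ) : EReal) = ∑ a ∈ s, (f a : EReal) :=
  map_sum (⟨⟨Real.toEReal, EReal.coe_zero⟩, EReal.coe_add⟩ : ℝ →+ EReal) f s

theorem IsFinPartition.integral_eq_sum_setIntegral_preimage {Ω α G : Type*}
    [MeasurableSpace Ω] [MeasurableSpace α] [NormedAddCommGroup G] [NormedSpace ℝ G]
    {μ : Measure Ω} {Ps : Finset (Set α)} (hPs : IsFinPartition Ps) {ξ : Ω → α}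
    (hξ : Measurable ξ) {f : Ω → G} (hf : Integrable f μ) :
    ∫ ω, f ω ∂μ = ∑ P ∈ Ps, ∫ ω in ξ ⁻¹' P, f ω ∂μ := by
  obtain ⟨hmeas, hdisj, hcover⟩ := hPs
  have hunion : ⋃ P ∈ Ps, ξ ⁻¹' P = Set.univ := by
    rw [← Set.preimage_iUnion₂, ← Finset.set_biUnion_coe, ← Set.sUnion_eq_biUnion, hcover,
      Set.preimage_univ]
  rw [← integral_biUnion_finset Ps (fun P hP => hξ (hmeas P hP))
      (fun P hP R hR hne => (hdisj hP hR hne).preimage ξ) (fun P _ => hf.integrableOn),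
    hunion, setIntegral_univ]

section SupOfLinear

variable {Ω E ι : Type*} [MeasurableSpace Ω] [NormedAddCommGroup E] [NormedSpace ℝ E]
  [CompleteSpace E] {μ : Measure Ω} {s : Set Ω} {L : ι → E →L[ℝ] ℝ} {S : Set ι} {f : Ω → E}

theorem setIntegral_clm_le_measureReal_mul_iSup (hs : μ s ≠ ⊤) (hf : IntegrableOn f s μ)
    {i : ι} (hi : i ∈ S) :
    ((∫ ω in s, L i (f ω) ∂μ : ℝ) : EReal) ≤
      (μ.real s : EReal) * ⨆ j ∈ S, ((L j (⨍ ω in s, f ω ∂μ) : ℝ) : EReal) := by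
  rw [(L i).integral_comp_comm hf, ← measure_smul_setAverage f hs, map_smul, smul_eq_mul,
    EReal.coe_mul]
  exact mul_le_mul_of_nonneg_left
    (le_iSup₂ (f := fun j (_ : j ∈ S) => ((L j (⨍ ω in s, f ω ∂μ) : ℝ) : EReal)) i hi)
    (EReal.coe_nonneg.2 measureReal_nonneg)

theorem measureReal_mul_iSup_clm_setAverage_le (hs : μ s ≠ ⊤) (hf : IntegrableOn f s μ)
    {g : Ω → ℝ} (hg : IntegrableOn g s μ) (hLg : ∀ i ∈ S, ∀ᵐ ω ∂μ.restrict s, L i (f ω) ≤ g ω) :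
    (μ.real s : EReal) * ⨆ i ∈ S, ((L i (⨍ ω in s, f ω ∂μ) : ℝ) : EReal) ≤
      ((∫ ω in s, g ω ∂μ : ℝ) : EReal) := by
  rcases measureReal_nonneg.eq_or_lt with hzero | hpos
  · have hnull : μ s = 0 := (measureReal_eq_zero_iff hs).1 hzero.symm
    rw [← hzero, EReal.coe_zero, zero_mul, Measure.restrict_eq_zero.2 hnull,
      integral_zero_measure, EReal.coe_zero]
  have hsup : ⨆ i ∈ S, ((L i (⨍ ω in s, f ω ∂μ) : ℝ) : EReal) ≤
      (((μ.real s)⁻¹ * ∫ ω in s, g ω ∂μ : ℝ) : EReal) := by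
    refine iSup₂_le fun i hi => EReal.coe_le_coe_iff.2 ?_
    rw [le_inv_mul_iff₀ hpos, ← smul_eq_mul, ← map_smul, measure_smul_setAverage f hs,
      ← (L i).integral_comp_comm hf]
    exact integral_mono_ae (L i |>.integrable_comp hf) hg (hLg i hi)
  calc (μ.real s : EReal) * ⨆ i ∈ S, ((L i (⨍ ω in s, f ω ∂μ) : ℝ) : EReal)
      ≤ (μ.real s : EReal) * (((μ.real s)⁻¹ * ∫ ω in s, g ω ∂μ : ℝ) : EReal) :=
        mul_le_mul_of_nonneg_left hsup (EReal.coe_nonneg.2 hpos.le)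
    _ = ((∫ ω in s, g ω ∂μ : ℝ) : EReal) := by
        rw [← EReal.coe_mul, mul_inv_cancel_left₀ hpos.ne']

end SupOfLinear

section Recourse

variable {l n m : ℕ}

def dualObjectiveCLM (x : Fin n → ℝ) (lam : Fin l → ℝ) : Xi l n →L[ℝ] ℝ :=
  LinearMap.toContinuousLinearMap
    { toFun := fun ξ => ∑ i, (ξ.2 i - ∑ j, ξ.1 i j * x j) * lam i
      map_add' := fun a b => by
        rw [← Finset.sum_add_distrib]
        refine Finset.sum_congr rfl fun i _ => ?_
        simp only [Prod.snd_add, Prod.fst_add, Pi.add_apply, add_mul, Finset.sum_add_distrib]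
        ring
      map_smul' := fun c a => by
        rw [RingHom.id_apply, smul_eq_mul, Finset.mul_sum]
        refine Finset.sum_congr rfl fun i _ => ?_
        simp only [Prod.smul_snd, Prod.smul_fst, Pi.smul_apply, smul_eq_mul, mul_assoc,
          ← Finset.mul_sum]
        ring }

theorem Qfun_eq_iSup_dualObjectiveCLM (W : Fin l → Fin m → ℝ) (q : Fin m → ℝ) (x : Fin n → ℝ)
    (ξ : Xi l n) : Qfun W q x ξ = ⨆ lam ∈ polyD W q, ((dualObjectiveCLM x lam ξ : ℝ) : EReal) :=
  rfl

theorem dualObjectiveCLM_le_toReal_Qfun {W : Fin l → Fin m → ℝ} {q : Fin m → ℝ} (x : Fin n → ℝ)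
    {lam : Fin l → ℝ} (hlam : lam ∈ polyD W q) {ξ : Xi l n} (hξ : Qfun W q x ξ ≠ ⊤) :
    dualObjectiveCLM x lam ξ ≤ (Qfun W q x ξ).toReal := by
  have hle : ((dualObjectiveCLM x lam ξ : ℝ) : EReal) ≤ Qfun W q x ξ := by
    rw [Qfun_eq_iSup_dualObjectiveCLM]
    exact le_iSup₂ (f := fun lam (_ : lam ∈ polyD W q) => ((dualObjectiveCLM x lam ξ : ℝ) : EReal))
      lam hlam
  exact EReal.coe_le_coe_iff.1 (hle.trans (EReal.le_coe_toReal hξ))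

theorem condMean_eq_setAverage {Ω : Type*} [MeasurableSpace Ω] (ℙ : Measure Ω)
    (ξ : Ω → Xi l n) (P : Set (Xi l n)) :
    condMean ℙ ξ P = ⨍ ω in ξ ⁻¹' P, ξ ω ∂ℙ := by
  rw [condMean, setAverage_eq, measureReal_def]

-- `0 * ⊤ = 0` in `EReal`, so null cells contribute nothing with or without the `if`.
theorem Vpart_eq_sum {Ω : Type*} [MeasurableSpace Ω] (W : Fin l → Fin m → ℝ) (q : Fin m → ℝ)
    (ℙ : Measure Ω) (ξ : Ω → Xi l n) (Ps : Finset (Set (Xi l n))) (x : Fin n → ℝ) :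
    Vpart W q ℙ ξ Ps x =
      ∑ P ∈ Ps, (ℙ.real (ξ ⁻¹' P) : EReal) * Qfun W q x (⨍ ω in ξ ⁻¹' P, ξ ω ∂ℙ) := by
  refine Finset.sum_congr rfl fun P _ => ?_
  rw [condMean_eq_setAverage, measureReal_def]
  split_ifs with hpos
  · rfl
  · rw [not_lt, nonpos_iff_eq_zero] at hpos
    rw [hpos, ENNReal.toReal_zero, EReal.coe_zero, zero_mul]

end Recourse

theorem jensen_sandwich_partition_value_general
    {Ω : Type*} [MeasurableSpace Ω] {l n m : ℕ}
    (W : Fin l → Fin m → ℝ) (q : Fin m → ℝ)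
    (ℙ : Measure Ω) [IsProbabilityMeasure ℙ]
    (ξ : Ω → Xi l n) (hξmeas : Measurable ξ) (hξint : Integrable ξ ℙ)
    (Ps : Finset (Set (Xi l n))) (hPs : IsFinPartition Ps)
    (x : Fin n → ℝ)
    (hQint : (∀ᵐ ω ∂ℙ, Qfun W q x (ξ ω) ≠ ⊤) ∧
      Integrable (fun ω => (Qfun W q x (ξ ω)).toReal) ℙ) :
    Qfun W q x (∫ ω, ξ ω ∂ℙ) ≤ Vpart W q ℙ ξ Ps x ∧
      Vpart W q ℙ ξ Ps x ≤ Vtrue W q ℙ ξ x := by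
  have hsplit : ∀ {f : Ω → ℝ}, Integrable f ℙ → ∫ ω, f ω ∂ℙ = ∑ P ∈ Ps, ∫ ω in ξ ⁻¹' P, f ω ∂ℙ :=
    hPs.integral_eq_sum_setIntegral_preimage hξmeas
  simp only [Vpart_eq_sum, Qfun_eq_iSup_dualObjectiveCLM]
  constructor
  · refine iSup₂_le fun lam hlam => ?_
    rw [← (dualObjectiveCLM x lam).integral_comp_comm hξint,
      hsplit ((dualObjectiveCLM x lam).integrable_comp hξint), EReal.coe_finset_sum]
    exact Finset.sum_le_sum fun P _ =>
      setIntegral_clm_le_measureReal_mul_iSup (measure_ne_top _ _) hξint.integrableOn hlam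
  · rw [Vtrue, if_pos hQint, hsplit hQint.2, EReal.coe_finset_sum]
    refine Finset.sum_le_sum fun P _ =>
      measureReal_mul_iSup_clm_setAverage_le (measure_ne_top _ _) hξint.integrableOn
        hQint.2.integrableOn fun lam hlam => ae_restrict_of_ae ?_
    exact hQint.1.mono fun ω hω => dualObjectiveCLM_le_toReal_Qfun x hlam hω

/-- Lemma 2, Eq. (12): `Q(x, E[ξ]) ≤ V_Ps(x) ≤ V(x)` whenever
`ω ↦ Q(x, ξ(ω))` is integrable (a.e. finite and with integrable real part). -/
theorem jensen_sandwich_partition_value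
    {Ω : Type*} [MeasurableSpace Ω] {l n m : ℕ}
    (hl : 0 < l) (hn : 0 < n) (hm : 0 < m)
    (W : Fin l → Fin m → ℝ) (q : Fin m → ℝ) (hD : (polyD W q).Nonempty)
    (ℙ : Measure Ω) [IsProbabilityMeasure ℙ]
    (ξ : Ω → Xi l n) (hξmeas : Measurable ξ) (hξint : Integrable ξ ℙ)
    (Ps : Finset (Set (Xi l n))) (hPs : IsFinPartition Ps)
    (x : Fin n → ℝ)
    (hQint : (∀ᵐ ω ∂ℙ, Qfun W q x (ξ ω) ≠ ⊤) ∧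
      Integrable (fun ω => (Qfun W q x (ξ ω)).toReal) ℙ) :
    Qfun W q x (∫ ω, ξ ω ∂ℙ) ≤ Vpart W q ℙ ξ Ps x ∧
      Vpart W q ℙ ξ Ps x ≤ Vtrue W q ℙ ξ x :=
  jensen_sandwich_partition_value_general W q ℙ ξ hξmeas hξint Ps hPs x hQint

end
end

section
/- Let x ∈ ℝⁿ and let P ⊆ Ξ be measurable with ℙ[ξ ∈ P] > 0, and suppose ω ↦ Q(x,ξ(ω))·1_{ξ∈P} is integrable. If there exists λ₀ ∈ D such that for ℙ-almost every ω with ξ(ω) = (T,h) ∈ P one has ⟨h − Tx, λ₀⟩ = Q(x, ξ(ω)), then Q(x, E[ξ|P]) = E[Q(x,ξ) | ξ ∈ P]. -/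
open MeasureTheory
open scoped BigOperators Classical

noncomputable section

/-- Lemma 6, (⇒) direction: if some `λ₀ ∈ D` attains the supremum
`Q(x, ξ(ω))` for ℙ-a.e. `ω` with `ξ(ω) ∈ P`, then `Q(x, E[ξ|P]) = E[Q(x,ξ) | ξ ∈ P]`. -/
theorem common_optimal_dual_implies_exact_aggregation
    {Ω : Type*} [MeasurableSpace Ω] {l n m : ℕ}
    (hl : 0 < l) (hn : 0 < n) (hm : 0 < m)
    (W : Fin l → Fin m → ℝ) (q : Fin m → ℝ) (hD : (polyD W q).Nonempty)
    (ℙ : Measure Ω) [IsProbabilityMeasure ℙ]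
    (ξ : Ω → Xi l n) (hξmeas : Measurable ξ) (hξint : Integrable ξ ℙ)
    (x : Fin n → ℝ) (P : Set (Xi l n)) (hP : MeasurableSet P)
    (hpos : 0 < ℙ (ξ ⁻¹' P))
    (hQint : (∀ᵐ ω ∂ℙ, ξ ω ∈ P → Qfun W q x (ξ ω) ≠ ⊤) ∧
      IntegrableOn (fun ω => (Qfun W q x (ξ ω)).toReal) (ξ ⁻¹' P) ℙ)
    (lam0 : Fin l → ℝ) (hlam0 : lam0 ∈ polyD W q)
    (hattain : ∀ᵐ ω ∂ℙ, ξ ω ∈ P →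
      ((∑ i, ((ξ ω).2 i - ∑ j, (ξ ω).1 i j * x j) * lam0 i : ℝ) : EReal)
        = Qfun W q x (ξ ω)) :
    Qfun W q x (condMean ℙ ξ P) = condQ W q ℙ ξ x P := by
  classical
  have hmeas_s : MeasurableSet (ξ ⁻¹' P) := hξmeas hP
  set s : Set Ω := ξ ⁻¹' P with hs
  set c : ℝ := (ℙ s).toReal⁻¹ with hc
  have hc_pos : 0 < (ℙ s).toReal := ENNReal.toReal_pos hpos.ne' (measure_ne_top ℙ s)
  have hc_nonneg : 0 ≤ c := inv_nonneg.2 hc_pos.le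
  -- continuous linear maps ξ' ↦ ⟨h - Tx, lam⟩
  have Lmk : ∀ lam : Fin l → ℝ, ∃ L : Xi l n →L[ℝ] ℝ, ∀ ξ' : Xi l n,
      L ξ' = ∑ i, (ξ'.2 i - ∑ j, ξ'.1 i j * x j) * lam i := by
    intro lam
    refine ⟨LinearMap.toContinuousLinearMap
      { toFun := fun ξ' => ∑ i, (ξ'.2 i - ∑ j, ξ'.1 i j * x j) * lam i
        map_add' := ?_
        map_smul' := ?_ }, fun ξ' => rfl⟩
    · intro a b
      simp only [Prod.fst_add, Prod.snd_add, Pi.add_apply]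
      rw [← Finset.sum_add_distrib]
      refine Finset.sum_congr rfl fun i _ => ?_
      have h1 : (∑ j, (a.1 i j + b.1 i j) * x j)
          = (∑ j, a.1 i j * x j) + ∑ j, b.1 i j * x j := by
        rw [← Finset.sum_add_distrib]
        exact Finset.sum_congr rfl fun j _ => by ring
      rw [h1]; ring
    · intro r a
      simp only [Prod.smul_fst, Prod.smul_snd, Pi.smul_apply, smul_eq_mul,
        RingHom.id_apply]
      rw [Finset.mul_sum]
      refine Finset.sum_congr rfl fun i _ => ?_
      have h1 : (∑ j, r * a.1 i j * x j) = r * ∑ j, a.1 i j * x j := by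
        rw [Finset.mul_sum]
        exact Finset.sum_congr rfl fun j _ => by ring
      rw [h1]; ring
  choose L hL using Lmk
  have hint : ∀ lam, IntegrableOn (fun ω => (L lam) (ξ ω)) s ℙ :=
    fun lam => (L lam).integrable_comp (hξint.integrableOn)
  set I : (Fin l → ℝ) → ℝ := fun lam => ∫ ω in s, (L lam) (ξ ω) ∂ℙ with hI
  have hLcond : ∀ lam, (L lam) (condMean ℙ ξ P) = c * I lam := by
    intro lam
    have : condMean ℙ ξ P = c • ∫ ω in s, ξ ω ∂ℙ := rfl
    rw [this, _root_.map_smul, smul_eq_mul, ← (L lam).integral_comp_comm hξint.integrableOn]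
  -- a.e. on s, lam0 attains Q
  have h_ae0 : ∀ᵐ ω ∂ℙ.restrict s, ((L lam0) (ξ ω) : EReal) = Qfun W q x (ξ ω) := by
    filter_upwards [ae_restrict_mem hmeas_s, ae_restrict_of_ae hattain] with ω h1 h2
    rw [hL lam0]
    exact h2 h1
  have hIle : ∀ lam ∈ polyD W q, I lam ≤ I lam0 := by
    intro lam hlam
    refine integral_mono_ae (hint lam) (hint lam0) ?_
    filter_upwards [h_ae0] with ω hω
    have hle : (((L lam) (ξ ω) : ℝ) : EReal) ≤ Qfun W q x (ξ ω) := by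
      rw [hL lam, Qfun]
      exact le_biSup (fun lam => (((∑ i, ((ξ ω).2 i - ∑ j, (ξ ω).1 i j * x j) * lam i : ℝ)) : EReal)) hlam
    rw [← hω] at hle
    exact_mod_cast hle
  have hIB : ∫ ω in s, (Qfun W q x (ξ ω)).toReal ∂ℙ = I lam0 := by
    refine integral_congr_ae ?_
    filter_upwards [h_ae0] with ω hω
    rw [← hω]
    simp
  have hQcm : Qfun W q x (condMean ℙ ξ P) = ((c * I lam0 : ℝ) : EReal) := by
    apply le_antisymm
    · rw [Qfun]
      refine iSup₂_le fun lam hlam => ?_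
      have h1 : (∑ i, ((condMean ℙ ξ P).2 i
            - ∑ j, (condMean ℙ ξ P).1 i j * x j) * lam i) = c * I lam := by
        rw [← hL lam, hLcond]
      rw [h1]
      exact_mod_cast mul_le_mul_of_nonneg_left (hIle lam hlam) hc_nonneg
    · have h1 : ((c * I lam0 : ℝ) : EReal)
          = ((∑ i, ((condMean ℙ ξ P).2 i
              - ∑ j, (condMean ℙ ξ P).1 i j * x j) * lam0 i : ℝ) : EReal) := by
        rw [← hL lam0, hLcond]
      rw [h1, Qfun]
      exact le_biSup (fun lam => (((∑ i, ((condMean ℙ ξ P).2 i - ∑ j, (condMean ℙ ξ P).1 i j * x j) * lam i : ℝ)) : EReal)) hlam0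
  rw [condQ, if_pos hQint, hQcm, ← hs, hIB]

end
end

section
/- Let x ∈ ℝⁿ and let P ⊆ Ξ be measurable with ℙ[ξ ∈ P] > 0. Suppose Q(x, ξ(ω)) < +∞ for ℙ-almost every ω, that ω ↦ Q(x,ξ(ω))·1_{ξ∈P} is integrable, and that Q(x, E[ξ|P]) = E[Q(x,ξ) | ξ ∈ P]. Then there exists λ₀ ∈ D such that for ℙ-almost every ω with ξ(ω) = (T,h) ∈ P one has ⟨h − Tx, λ₀⟩ = Q(x, ξ(ω)). -/
open MeasureTheory
open scoped BigOperators Classical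

noncomputable section

/-! The dual problem at the aggregated scenario `E[ξ | P]` is a linear program with finite value,
so it has an optimal solution `λ₀`: a linear function bounded above on a nonempty polyhedron
attains its supremum. Since `⟨h - T x, λ₀⟩` is linear in `ξ = (T, h)`, its conditional mean on
`{ξ ∈ P}` is `Q(x, E[ξ | P]) = E[Q(x, ξ) | ξ ∈ P]`. As `⟨h - T x, λ₀⟩ ≤ Q(x, ξ)` pointwise, the
nonnegative gap has zero integral on `{ξ ∈ P}` and therefore vanishes almost everywhere there.

Attainment is proved by induction on the number of constraints. If some direction in the
kernel of the objective loosens a constraint while tightening none, the loosened constraints can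
be dropped; otherwise the relevant superlevel set is compact modulo the common kernel. -/

open Filter Topology
open scoped RealInnerProductSpace

section Polyhedron

variable {E : Type*} [NormedAddCommGroup E] [InnerProductSpace ℝ E] {ι : Type*}

def polyhedron (J : Finset ι) (w : ι → E) (b : ι → ℝ) : Set E :=
  {x | ∀ j ∈ J, ⟪w j, x⟫ ≤ b j}

lemma isClosed_polyhedron (J : Finset ι) (w : ι → E) (b : ι → ℝ) :
    IsClosed (polyhedron J w b) := by
  simp only [polyhedron, Set.ofPred_forall]
  exact isClosed_biInter fun j _ =>
    isClosed_le (continuous_const.inner continuous_id) continuous_const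

lemma polyhedron_mono {J J' : Finset ι} (h : J' ⊆ J) (w : ι → E) (b : ι → ℝ) :
    polyhedron J w b ⊆ polyhedron J' w b :=
  fun _ hx j hj => hx j (h hj)

lemma exists_add_smul_mem_polyhedron {J : Finset ι} {w : ι → E} {b : ι → ℝ} {d x : E}
    (hd : ∀ j ∈ J, ⟪w j, d⟫ ≤ 0) (hx : x ∈ polyhedron (J.filter fun j => ⟪w j, d⟫ = 0) w b) :
    ∃ t : ℝ, x + t • d ∈ polyhedron J w b := by
  have : ∀ᶠ t : ℝ in atTop, ∀ j ∈ J, ⟪w j, x + t • d⟫ ≤ b j := by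
    refine (eventually_all_finset J).2 fun j hj => ?_
    simp only [inner_add_right, real_inner_smul_right]
    rcases (hd j hj).lt_or_eq with hneg | hzero
    · exact (tendsto_atBot_add_const_left _ _
        (tendsto_id.atTop_mul_const_of_neg hneg)).eventually_le_atBot _
    · exact Eventually.of_forall fun t => by
        simpa [hzero] using hx j (Finset.mem_filter.2 ⟨hj, hzero⟩)
  exact this.exists

lemma exists_asymptotic_direction [FiniteDimensional ℝ E] {K : Submodule ℝ E} {S : Set E}
    (hSK : S ⊆ K) (hS : ¬ Bornology.IsBounded S) :
    ∃ d ∈ K, d ≠ 0 ∧ ∀ (v : E) (a : ℝ), (∀ x ∈ S, ⟪v, x⟫ ≤ a) → ⟪v, d⟫ ≤ 0 := by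
  rw [Metric.isBounded_iff_subset_closedBall 0] at hS
  push Not at hS
  choose x hxS hx using fun k : ℕ => Set.not_subset.1 (hS k)
  have hxk : ∀ k : ℕ, (k : ℝ) < ‖x k‖ := fun k => by simpa using hx k
  have hxpos : ∀ k, 0 < ‖x k‖ := fun k => (Nat.cast_nonneg k).trans_lt (hxk k)
  set u : ℕ → E := fun k => ‖x k‖⁻¹ • x k
  have hu : ∀ k, ‖u k‖ = 1 := fun k => by
    simp [u, norm_smul, (hxpos k).ne']
  obtain ⟨d, -, φ, hφ, hlim⟩ := (isCompact_closedBall (0 : E) 1).tendsto_subseq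
    (x := u) fun k => by simp [hu k]
  have hnorm : Tendsto (fun k => ‖x (φ k)‖⁻¹) atTop (𝓝 0) := by
    refine tendsto_inv_atTop_zero.comp
      (tendsto_atTop_mono (fun k => ?_) tendsto_natCast_atTop_atTop)
    exact (Nat.cast_le.2 (hφ.id_le k)).trans (hxk (φ k)).le
  refine ⟨d, K.closed_of_finiteDimensional.mem_of_tendsto hlim
      (Eventually.of_forall fun k => K.smul_mem _ (hSK (hxS _))), ?_, fun v a ha => ?_⟩
  · rintro rfl
    simpa [Function.comp_def, hu] using (tendsto_norm.comp hlim)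
  · refine le_of_tendsto_of_tendsto' ((tendsto_const_nhds (x := v)).inner hlim)
      (by simpa using hnorm.mul_const a) fun k => ?_
    simp only [Function.comp_apply, u, real_inner_smul_right]
    exact mul_le_mul_of_nonneg_left (ha _ (hxS _)) (inv_nonneg.2 (hxpos _).le)

lemma inner_starProjection_of_mem (K : Submodule ℝ E) [K.HasOrthogonalProjection] {u : E}
    (hu : u ∈ K) (v : E) : ⟪u, K.starProjection v⟫ = ⟪u, v⟫ := by
  rw [← Submodule.inner_starProjection_left_eq_right, K.starProjection_eq_self_iff.2 hu]

variable [FiniteDimensional ℝ E] {J : Finset ι} {w : ι → E} {b : ι → ℝ} {c : E}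

/-- Projecting onto the span of `c` and the `w j` changes neither the constraints nor the
objective, and inside that span the superlevel sets of `⟪c, ·⟫` on the polyhedron are compact. -/
lemma exists_isMaxOn_inner_polyhedron_of_recession_orthogonal
    (hne : (polyhedron J w b).Nonempty) (hbdd : BddAbove ((⟪c, ·⟫) '' polyhedron J w b))
    (hrec : ∀ d, ⟪c, d⟫ = 0 → (∀ j ∈ J, ⟪w j, d⟫ ≤ 0) → ∀ j ∈ J, 0 ≤ ⟪w j, d⟫) :
    ∃ x ∈ polyhedron J w b, IsMaxOn (⟪c, ·⟫) (polyhedron J w b) x := by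
  set F := polyhedron J w b
  set K := Submodule.span ℝ (insert c (w '' J))
  have hcK : c ∈ K := Submodule.subset_span (Set.mem_insert _ _)
  have hwK : ∀ j ∈ J, w j ∈ K := fun j hj =>
    Submodule.subset_span (Set.mem_insert_of_mem _ ⟨j, hj, rfl⟩)
  have hprojF : ∀ y ∈ F, K.starProjection y ∈ F := fun y hy j hj => by
    rw [inner_starProjection_of_mem K (hwK j hj)]
    exact hy j hj
  obtain ⟨x₀, hx₀⟩ := hne
  obtain ⟨s, hs⟩ := hbdd
  set C := F ∩ K ∩ {y | ⟪c, x₀⟫ ≤ ⟪c, y⟫}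
  have hC : IsCompact C := by
    refine Metric.isCompact_of_isClosed_isBounded (((isClosed_polyhedron J w b).inter
      K.closed_of_finiteDimensional).inter
        (isClosed_le continuous_const (continuous_const.inner continuous_id))) ?_
    by_contra hunb
    obtain ⟨d, hdK, hd0, hd⟩ := exists_asymptotic_direction (fun y hy => hy.1.2) hunb
    have hwd : ∀ j ∈ J, ⟪w j, d⟫ ≤ 0 := fun j hj => hd (w j) (b j) fun y hy => hy.1.1 j hj
    have hcd : ⟪c, d⟫ = 0 := by
      refine le_antisymm (hd c s fun y hy => hs ⟨y, hy.1.1, rfl⟩) ?_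
      simpa [inner_neg_left] using hd (-c) (-⟪c, x₀⟫) fun y hy => by simpa using hy.2
    have hKd : K ≤ (ℝ ∙ d)ᗮ := by
      refine Submodule.span_le.2 (Set.insert_subset_iff.2 ⟨?_, ?_⟩)
      · exact Submodule.mem_orthogonal_singleton_iff_inner_left.2 hcd
      · rintro _ ⟨j, hj, rfl⟩
        exact Submodule.mem_orthogonal_singleton_iff_inner_left.2
          (le_antisymm (hwd j hj) (hrec d hcd hwd j hj))
    exact hd0 (inner_self_eq_zero.1 (Submodule.mem_orthogonal_singleton_iff_inner_left.1
      (hKd hdK)))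
  have hprojC : ∀ y ∈ F, ⟪c, x₀⟫ ≤ ⟪c, y⟫ → K.starProjection y ∈ C := fun y hy h =>
    ⟨⟨hprojF y hy, K.starProjection_apply_mem y⟩, (inner_starProjection_of_mem K hcK y).ge.trans' h⟩
  obtain ⟨x, hxC, hmax⟩ := hC.exists_isMaxOn (f := (⟪c, ·⟫)) ⟨_, hprojC x₀ hx₀ le_rfl⟩
    (continuous_const.inner continuous_id).continuousOn
  refine ⟨x, hxC.1.1, fun y hy => ?_⟩
  rcases le_total ⟪c, y⟫ ⟪c, x₀⟫ with h | h
  · exact h.trans hxC.2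
  · simpa [inner_starProjection_of_mem K hcK] using hmax (hprojC y hy h)

theorem exists_isMaxOn_inner_polyhedron
    (hne : (polyhedron J w b).Nonempty) (hbdd : BddAbove ((⟪c, ·⟫) '' polyhedron J w b)) :
    ∃ x ∈ polyhedron J w b, IsMaxOn (⟪c, ·⟫) (polyhedron J w b) x := by
  induction J using Finset.strongInduction with
  | H J ih =>
  by_cases hdir : ∃ d, ⟪c, d⟫ = 0 ∧ (∀ j ∈ J, ⟪w j, d⟫ ≤ 0) ∧ ∃ j ∈ J, ⟪w j, d⟫ < 0
  · -- Moving along `d` restores every constraint with `⟪w j, d⟫ < 0` without changing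
    -- `⟪c, ·⟫`, so those constraints can be dropped.
    obtain ⟨d, hcd, hwd, j, hj, hjd⟩ := hdir
    set J₀ := J.filter fun j => ⟪w j, d⟫ = 0
    have hsub : polyhedron J w b ⊆ polyhedron J₀ w b :=
      polyhedron_mono (Finset.filter_subset _ _) w b
    have hpush : ∀ y ∈ polyhedron J₀ w b, ∃ z ∈ polyhedron J w b, ⟪c, z⟫ = ⟪c, y⟫ := fun y hy => by
      obtain ⟨t, ht⟩ := exists_add_smul_mem_polyhedron hwd hy
      exact ⟨_, ht, by simp [inner_add_right, real_inner_smul_right, hcd]⟩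
    obtain ⟨s, hs⟩ := hbdd
    obtain ⟨x, hx, hmax⟩ := ih J₀ (Finset.filter_ssubset.2 ⟨j, hj, hjd.ne⟩) (hne.mono hsub)
      ⟨s, by
        rintro _ ⟨y, hy, rfl⟩
        obtain ⟨z, hz, hzy⟩ := hpush y hy
        exact show ⟪c, y⟫ ≤ s from hzy ▸ hs ⟨z, hz, rfl⟩⟩
    obtain ⟨z, hz, hzx⟩ := hpush x hx
    exact ⟨z, hz, fun y hy => show ⟪c, y⟫ ≤ ⟪c, z⟫ from hzx ▸ hmax (hsub hy)⟩
  · push Not at hdir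
    exact exists_isMaxOn_inner_polyhedron_of_recession_orthogonal hne hbdd hdir

end Polyhedron

section RecourseCost

variable {l n m : ℕ}

def dualObj (x : Fin n → ℝ) (p : Xi l n) (lam : Fin l → ℝ) : ℝ :=
  ∑ i, (p.2 i - ∑ j, p.1 i j * x j) * lam i

def dualObjCLM (x : Fin n → ℝ) (lam : Fin l → ℝ) : Xi l n →L[ℝ] ℝ :=
  LinearMap.toContinuousLinearMap
    { toFun := fun p => dualObj x p lam
      map_add' := fun p p' => by
        simp only [dualObj, ← Finset.sum_add_distrib]
        refine Finset.sum_congr rfl fun i _ => ?_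
        simp only [Prod.fst_add, Prod.snd_add, Pi.add_apply, add_mul, Finset.sum_add_distrib]
        ring
      map_smul' := fun r p => by
        simp only [dualObj, smul_eq_mul, RingHom.id_apply, Finset.mul_sum]
        refine Finset.sum_congr rfl fun i _ => ?_
        simp only [Prod.smul_fst, Prod.smul_snd, Pi.smul_apply, smul_eq_mul, mul_assoc,
          ← Finset.mul_sum]
        ring }

@[simp]
lemma dualObjCLM_apply (x : Fin n → ℝ) (lam : Fin l → ℝ) (p : Xi l n) :
    dualObjCLM x lam p = dualObj x p lam := rfl

lemma map_condMean {Ω F : Type*} [MeasurableSpace Ω] [NormedAddCommGroup F] [NormedSpace ℝ F]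
    [CompleteSpace F] {ℙ : Measure Ω} {ξ : Ω → Xi l n} {P : Set (Xi l n)}
    (hξ : IntegrableOn ξ (ξ ⁻¹' P) ℙ) (L : Xi l n →L[ℝ] F) :
    L (condMean ℙ ξ P) = (ℙ (ξ ⁻¹' P)).toReal⁻¹ • ∫ ω in ξ ⁻¹' P, L (ξ ω) ∂ℙ := by
  rw [condMean, L.map_smul, L.integral_comp_comm hξ]

variable {W : Fin l → Fin m → ℝ} {q : Fin m → ℝ}

lemma coe_dualObj_le_Qfun {lam : Fin l → ℝ} (hlam : lam ∈ polyD W q) (x : Fin n → ℝ)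
    (p : Xi l n) : (dualObj x p lam : EReal) ≤ Qfun W q x p :=
  le_biSup (fun lam => (dualObj x p lam : EReal)) hlam

lemma dualObj_le_toReal_Qfun {lam : Fin l → ℝ} (hlam : lam ∈ polyD W q) {x : Fin n → ℝ}
    {p : Xi l n} (hQ : Qfun W q x p ≠ ⊤) : dualObj x p lam ≤ (Qfun W q x p).toReal := by
  simpa using EReal.toReal_le_toReal (coe_dualObj_le_Qfun hlam x p) (EReal.coe_ne_bot _) hQ

lemma Qfun_ne_bot (hD : (polyD W q).Nonempty) (x : Fin n → ℝ) (p : Xi l n) :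
    Qfun W q x p ≠ ⊥ :=
  ((EReal.bot_lt_coe _).trans_le (coe_dualObj_le_Qfun hD.some_mem x p)).ne'

lemma exists_coe_dualObj_eq_Qfun (hD : (polyD W q).Nonempty) {x : Fin n → ℝ} {p : Xi l n}
    (hQ : Qfun W q x p ≠ ⊤) : ∃ lam ∈ polyD W q, (dualObj x p lam : EReal) = Qfun W q x p := by
  set F := polyhedron Finset.univ (fun j => WithLp.toLp 2 fun i => W i j) q
  set c : EuclideanSpace ℝ (Fin l) := WithLp.toLp 2 fun i => p.2 i - ∑ j, p.1 i j * x j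
  have hmem : ∀ lam, WithLp.toLp 2 lam ∈ F ↔ lam ∈ polyD W q := fun lam => by
    simp [F, polyhedron, polyD, EuclideanSpace.inner_toLp_toLp, dotProduct, mul_comm]
  have hobj : ∀ lam, ⟪c, WithLp.toLp 2 lam⟫ = dualObj x p lam := fun lam => by
    simp [c, dualObj, EuclideanSpace.inner_toLp_toLp, dotProduct, mul_comm]
  obtain ⟨y, hy, hmax⟩ := exists_isMaxOn_inner_polyhedron (c := c)
    ⟨_, (hmem _).2 hD.some_mem⟩ ⟨(Qfun W q x p).toReal, by
      rintro _ ⟨y, hy, rfl⟩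
      obtain ⟨lam, rfl⟩ := WithLp.toLp_surjective 2 y
      simpa only [hobj] using dualObj_le_toReal_Qfun ((hmem lam).1 hy) hQ⟩
  obtain ⟨lam₀, rfl⟩ := WithLp.toLp_surjective 2 y
  have hlam₀ := (hmem lam₀).1 hy
  refine ⟨lam₀, hlam₀, le_antisymm (coe_dualObj_le_Qfun hlam₀ x p) (iSup₂_le fun lam hlam => ?_)⟩
  have h := isMaxOn_iff.1 hmax _ ((hmem lam).2 hlam)
  rw [hobj, hobj] at h
  exact EReal.coe_le_coe_iff.2 h

end RecourseCost

theorem exact_aggregation_implies_common_optimal_dual_general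
    {Ω : Type*} [MeasurableSpace Ω] {l n m : ℕ}
    (W : Fin l → Fin m → ℝ) (q : Fin m → ℝ) (hD : (polyD W q).Nonempty)
    (ℙ : Measure Ω) [IsProbabilityMeasure ℙ]
    (ξ : Ω → Xi l n) (hξint : Integrable ξ ℙ)
    (x : Fin n → ℝ) (P : Set (Xi l n))
    (hpos : 0 < ℙ (ξ ⁻¹' P))
    (hfin : ∀ᵐ ω ∂ℙ, Qfun W q x (ξ ω) < ⊤)
    (hQint : IntegrableOn (fun ω => (Qfun W q x (ξ ω)).toReal) (ξ ⁻¹' P) ℙ)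
    (hexact : Qfun W q x (condMean ℙ ξ P) = condQ W q ℙ ξ x P) :
    ∃ lam0 ∈ polyD W q, ∀ᵐ ω ∂ℙ, ξ ω ∈ P →
      ((∑ i, ((ξ ω).2 i - ∑ j, (ξ ω).1 i j * x j) * lam0 i : ℝ) : EReal)
        = Qfun W q x (ξ ω) := by
  set A := ξ ⁻¹' P
  have ha : (ℙ A).toReal⁻¹ ≠ 0 := inv_ne_zero (ENNReal.toReal_pos hpos.ne' (measure_ne_top ℙ A)).ne'
  have hcond : condQ W q ℙ ξ x P =
      (((ℙ A).toReal⁻¹ * ∫ ω in A, (Qfun W q x (ξ ω)).toReal ∂ℙ : ℝ) : EReal) :=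
    if_pos ⟨hfin.mono fun ω h _ => h.ne, hQint⟩
  obtain ⟨lam0, hlam0, hval⟩ := exists_coe_dualObj_eq_Qfun hD (p := condMean ℙ ξ P)
    (hexact ▸ hcond ▸ EReal.coe_ne_top _)
  rw [hexact, hcond, EReal.coe_eq_coe_iff, ← dualObjCLM_apply,
    map_condMean hξint.integrableOn, smul_eq_mul] at hval
  have hae : (fun ω => dualObj x (ξ ω) lam0) =ᵐ[ℙ.restrict A]
      fun ω => (Qfun W q x (ξ ω)).toReal :=
    (integral_eq_iff_of_ae_le ((dualObjCLM x lam0).integrable_comp hξint.integrableOn) hQint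
      (ae_restrict_of_ae (hfin.mono fun ω h => dualObj_le_toReal_Qfun hlam0 h.ne))).1
      (mul_left_cancel₀ ha hval)
  refine ⟨lam0, hlam0, ?_⟩
  filter_upwards [ae_imp_of_ae_restrict hae, hfin] with ω hω hfinω hωP
  rw [dualObj] at hω
  rw [hω hωP, EReal.coe_toReal hfinω.ne (Qfun_ne_bot hD x _)]

/-- Lemma 6, (⇐) direction: if `Q(x,ξ) < +∞` a.s., `Q(x,ξ)1_{ξ∈P}` is
integrable and `Q(x, E[ξ|P]) = E[Q(x,ξ) | ξ ∈ P]`, then some `λ₀ ∈ D` attains the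
supremum `Q(x, ξ(ω))` for ℙ-a.e. `ω` with `ξ(ω) ∈ P`. -/
theorem exact_aggregation_implies_common_optimal_dual
    {Ω : Type*} [MeasurableSpace Ω] {l n m : ℕ}
    (hl : 0 < l) (hn : 0 < n) (hm : 0 < m)
    (W : Fin l → Fin m → ℝ) (q : Fin m → ℝ) (hD : (polyD W q).Nonempty)
    (ℙ : Measure Ω) [IsProbabilityMeasure ℙ]
    (ξ : Ω → Xi l n) (hξmeas : Measurable ξ) (hξint : Integrable ξ ℙ)
    (x : Fin n → ℝ) (P : Set (Xi l n)) (hP : MeasurableSet P)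
    (hpos : 0 < ℙ (ξ ⁻¹' P))
    (hfin : ∀ᵐ ω ∂ℙ, Qfun W q x (ξ ω) < ⊤)
    (hQint : IntegrableOn (fun ω => (Qfun W q x (ξ ω)).toReal) (ξ ⁻¹' P) ℙ)
    (hexact : Qfun W q x (condMean ℙ ξ P) = condQ W q ℙ ξ x P) :
    ∃ lam0 ∈ polyD W q, ∀ᵐ ω ∂ℙ, ξ ω ∈ P →
      ((∑ i, ((ξ ω).2 i - ∑ j, (ξ ω).1 i j * x j) * lam0 i : ℝ) : EReal)
        = Qfun W q x (ξ ω) :=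
  exact_aggregation_implies_common_optimal_dual_general W q hD ℙ ξ hξint x P hpos hfin hQint hexact
end
end

section
/- Let x ∈ ℝⁿ and suppose ω ↦ Q(x,ξ(ω)) is integrable. Let 𝒫 be a finite measurable partition of Ξ such that for every P ∈ 𝒫 with ℙ[ξ ∈ P] > 0 there exists λ_P ∈ D with ⟨h − Tx, λ_P⟩ = Q(x, ξ(ω)) for ℙ-almost every ω with ξ(ω) = (T,h) ∈ P. Then V_𝒫(x) = V(x), i.e. the partition 𝒫 is adapted to x. -/
open MeasureTheory
open scoped BigOperators Classical

noncomputable section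

/-- The linear functional `ξ' ↦ ⟨h' - T'x, λ⟩` on `Ξ`. -/
private def glin {l n : ℕ} (x : Fin n → ℝ) (lam : Fin l → ℝ) : Xi l n →ₗ[ℝ] ℝ where
  toFun ξ' := ∑ i, (ξ'.2 i - ∑ j, ξ'.1 i j * x j) * lam i
  map_add' a b := by
    rw [← Finset.sum_add_distrib]
    refine Finset.sum_congr rfl fun i _ => ?_
    have h : (∑ j, (a + b).1 i j * x j) = (∑ j, a.1 i j * x j) + (∑ j, b.1 i j * x j) := by
      rw [← Finset.sum_add_distrib]
      exact Finset.sum_congr rfl fun j _ => by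
        simp [Prod.fst_add, add_mul]
    simp only [Prod.snd_add, Pi.add_apply] at *
    rw [h]; ring
  map_smul' c a := by
    simp only [RingHom.id_apply, smul_eq_mul]
    rw [Finset.mul_sum]
    refine Finset.sum_congr rfl fun i _ => ?_
    have h : (∑ j, (c • a).1 i j * x j) = c * ∑ j, a.1 i j * x j := by
      rw [Finset.mul_sum]
      exact Finset.sum_congr rfl fun j _ => by
        simp [Prod.smul_fst, mul_assoc]
    simp only [Prod.smul_snd, Pi.smul_apply, smul_eq_mul] at *
    rw [h]; ring

private def gclm {l n : ℕ} (x : Fin n → ℝ) (lam : Fin l → ℝ) : Xi l n →L[ℝ] ℝ :=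
  LinearMap.toContinuousLinearMap (glin x lam)

private lemma gclm_apply {l n : ℕ} (x : Fin n → ℝ) (lam : Fin l → ℝ) (ξ' : Xi l n) :
    gclm x lam ξ' = glin x lam ξ' := rfl

private lemma ereal_coe_fsum {α : Type*} (s : Finset α) (f : α → ℝ) :
    ((∑ a ∈ s, f a : ℝ) : EReal) = ∑ a ∈ s, ((f a : ℝ) : EReal) := by
  induction s using Finset.cons_induction with
  | empty => simp
  | cons a s h ih => rw [Finset.sum_cons, Finset.sum_cons, EReal.coe_add, ih]

/-- Theorem 3, sufficiency: if on every positive-probability cell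
`P ∈ Ps` some `λ_P ∈ D` attains the supremum `Q(x, ξ(ω))` a.e., then the partition is
adapted to `x`: `V_Ps(x) = V(x)`. -/
theorem adapted_partition_of_cellwise_optimal_dual
    {Ω : Type*} [MeasurableSpace Ω] {l n m : ℕ}
    (hl : 0 < l) (hn : 0 < n) (hm : 0 < m)
    (W : Fin l → Fin m → ℝ) (q : Fin m → ℝ) (hD : (polyD W q).Nonempty)
    (ℙ : Measure Ω) [IsProbabilityMeasure ℙ]
    (ξ : Ω → Xi l n) (hξmeas : Measurable ξ) (hξint : Integrable ξ ℙ)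
    (x : Fin n → ℝ)
    (hQint : (∀ᵐ ω ∂ℙ, Qfun W q x (ξ ω) ≠ ⊤) ∧
      Integrable (fun ω => (Qfun W q x (ξ ω)).toReal) ℙ)
    (Ps : Finset (Set (Xi l n))) (hPs : IsFinPartition Ps)
    (hdual : ∀ P ∈ Ps, 0 < ℙ (ξ ⁻¹' P) →
      ∃ lamP ∈ polyD W q, ∀ᵐ ω ∂ℙ, ξ ω ∈ P →
        ((∑ i, ((ξ ω).2 i - ∑ j, (ξ ω).1 i j * x j) * lamP i : ℝ) : EReal)
          = Qfun W q x (ξ ω)) :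
    Vpart W q ℙ ξ Ps x = Vtrue W q ℙ ξ x := by
  obtain ⟨hPmeas, hPdisj, hPunion⟩ := hPs
  set f : Ω → ℝ := fun ω => (Qfun W q x (ξ ω)).toReal with hfdef
  have hfint : Integrable f ℙ := hQint.2
  have hgint : ∀ lam : Fin l → ℝ, Integrable (fun ω => glin x lam (ξ ω)) ℙ := by
    intro lam
    have := (gclm x lam).integrable_comp hξint
    simpa only [gclm_apply] using this
  -- per-cell identity
  have key : ∀ P ∈ Ps,
      (if 0 < ℙ (ξ ⁻¹' P) then
        ((ℙ (ξ ⁻¹' P)).toReal : EReal) * Qfun W q x (condMean ℙ ξ P) else 0)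
        = ((∫ ω in ξ ⁻¹' P, f ω ∂ℙ : ℝ) : EReal) := by
    intro P hP
    by_cases hpos : 0 < ℙ (ξ ⁻¹' P)
    · rw [if_pos hpos]
      have hsmeas : MeasurableSet (ξ ⁻¹' P) := hξmeas (hPmeas P hP)
      have hμtop : ℙ (ξ ⁻¹' P) ≠ ⊤ := measure_ne_top ℙ _
      have hρ : 0 < (ℙ (ξ ⁻¹' P)).toReal := ENNReal.toReal_pos hpos.ne' hμtop
      obtain ⟨lamP, hlamP, haeq⟩ := hdual P hP hpos
      have haeq' : ∀ᵐ ω ∂(ℙ.restrict (ξ ⁻¹' P)),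
          ((glin x lamP (ξ ω) : ℝ) : EReal) = Qfun W q x (ξ ω) := by
        filter_upwards [ae_restrict_of_ae haeq, ae_restrict_mem hsmeas] with ω h1 h2
        exact h1 h2
      have hQne : ∀ᵐ ω ∂(ℙ.restrict (ξ ⁻¹' P)), Qfun W q x (ξ ω) ≠ ⊤ :=
        ae_restrict_of_ae hQint.1
      have hfae : (fun ω => f ω) =ᵐ[ℙ.restrict (ξ ⁻¹' P)] fun ω => glin x lamP (ξ ω) := by
        filter_upwards [haeq'] with ω h1
        simp only [hfdef, ← h1, EReal.toReal_coe]
      have hcomm : ∀ lam : Fin l → ℝ,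
          ∫ ω in ξ ⁻¹' P, glin x lam (ξ ω) ∂ℙ = glin x lam (∫ ω in ξ ⁻¹' P, ξ ω ∂ℙ) := by
        intro lam
        have := (gclm x lam).integral_comp_comm (hξint.restrict (s := ξ ⁻¹' P))
        simpa only [gclm_apply] using this
      have hIeq : ∫ ω in ξ ⁻¹' P, f ω ∂ℙ = glin x lamP (∫ ω in ξ ⁻¹' P, ξ ω ∂ℙ) := by
        rw [integral_congr_ae hfae, hcomm]
      have hcond : ∀ lam : Fin l → ℝ,
          glin x lam (condMean ℙ ξ P)
            = (ℙ (ξ ⁻¹' P)).toReal⁻¹ * glin x lam (∫ ω in ξ ⁻¹' P, ξ ω ∂ℙ) := by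
        intro lam
        rw [condMean, _root_.map_smul, smul_eq_mul]
      have hQc : Qfun W q x (condMean ℙ ξ P)
          = (((ℙ (ξ ⁻¹' P)).toReal⁻¹ * ∫ ω in ξ ⁻¹' P, f ω ∂ℙ : ℝ) : EReal) := by
        apply le_antisymm
        · rw [Qfun]
          refine iSup₂_le fun lam hlam => ?_
          have h1 : (∑ i, ((condMean ℙ ξ P).2 i - ∑ j, (condMean ℙ ξ P).1 i j * x j) * lam i)
              = glin x lam (condMean ℙ ξ P) := rfl
          rw [h1, hcond lam]
          apply EReal.coe_le_coe_iff.mpr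
          apply mul_le_mul_of_nonneg_left _ (inv_nonneg.mpr hρ.le)
          rw [← hcomm lam]
          refine setIntegral_mono_ae_restrict ((hgint lam).integrableOn)
            (hfint.integrableOn) ?_
          filter_upwards [hQne] with ω hne
          have hle : ((glin x lam (ξ ω) : ℝ) : EReal) ≤ Qfun W q x (ξ ω) := by
            rw [Qfun]
            exact le_iSup₂_of_le lam hlam le_rfl
          have := EReal.toReal_le_toReal hle (EReal.coe_ne_bot _) hne
          simpa [hfdef] using this
        · have h2 : (((ℙ (ξ ⁻¹' P)).toReal⁻¹ * ∫ ω in ξ ⁻¹' P, f ω ∂ℙ : ℝ) : EReal)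
              = ((glin x lamP (condMean ℙ ξ P) : ℝ) : EReal) := by
            rw [hcond lamP, hIeq]
          rw [h2, Qfun]
          exact le_iSup₂_of_le lamP hlamP le_rfl
      rw [hQc, ← EReal.coe_mul, ← mul_assoc, mul_inv_cancel₀ hρ.ne', one_mul]
    · rw [if_neg hpos]
      have h0 : ℙ (ξ ⁻¹' P) = 0 := by
        by_contra h
        exact hpos (pos_iff_ne_zero.mpr h)
      have h0' : ℙ.restrict (ξ ⁻¹' P) = 0 := Measure.restrict_eq_zero.mpr h0
      rw [show ∫ ω in ξ ⁻¹' P, f ω ∂ℙ = 0 from by rw [h0']; exact integral_zero_measure _]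
      simp
  rw [Vtrue, if_pos hQint, Vpart, Finset.sum_congr rfl key, ← ereal_coe_fsum]
  congr 1
  have hU : (⋃ P ∈ Ps, ξ ⁻¹' P) = Set.univ := by
    have : ξ ⁻¹' (⋃₀ (Ps : Set (Set (Xi l n)))) = ⋃ P ∈ Ps, ξ ⁻¹' P := by
      rw [Set.preimage_sUnion]
      simp
    rw [← this, hPunion, Set.preimage_univ]
  have := integral_biUnion_finset (f := f) (μ := ℙ) Ps
    (fun P hP => hξmeas (hPmeas P hP))
    (fun a ha b hb hab => (hPdisj ha hb hab).preimage ξ)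
    (fun P _ => hfint.integrableOn)
  rw [hU, setIntegral_univ] at this
  exact this.symm

end
end

section
/- Let x ∈ ℝⁿ with ω ↦ Q(x,ξ(ω)) integrable, and let 𝒫, ℛ be finite measurable partitions of Ξ such that 𝒫 ℙ-refines ℛ and V_ℛ(x) = V(x). Then ∂V_ℛ(x) ⊆ ∂V_𝒫(x) ⊆ ∂V(x), where for a function f : ℝⁿ → ℝ ∪ {+∞} the subdifferential is ∂f(x) := {g ∈ ℝⁿ : f(y) ≥ f(x) + ⟨g, y − x⟩ for all y ∈ ℝⁿ}. -/
open MeasureTheory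
open scoped BigOperators Classical

noncomputable section

namespace SubAux
variable {l n m : ℕ}

def Lclm (x : Fin n → ℝ) (lam : Fin l → ℝ) : Xi l n →L[ℝ] ℝ :=
  ∑ i : Fin l,
    (lam i • ((ContinuousLinearMap.proj i).comp
        (ContinuousLinearMap.snd ℝ (Fin l → Fin n → ℝ) (Fin l → ℝ)))
     - ∑ j : Fin n, (lam i * x j) •
        ((ContinuousLinearMap.proj j).comp
          ((ContinuousLinearMap.proj i).comp
            (ContinuousLinearMap.fst ℝ (Fin l → Fin n → ℝ) (Fin l → ℝ)))))

lemma Lclm_apply (x : Fin n → ℝ) (lam : Fin l → ℝ) (ξ : Xi l n) :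
    Lclm x lam ξ = ∑ i, (ξ.2 i - ∑ j, ξ.1 i j * x j) * lam i := by
  simp only [Lclm, ContinuousLinearMap.coe_sum', Finset.sum_apply,
    ContinuousLinearMap.sub_apply, ContinuousLinearMap.smul_apply,
    ContinuousLinearMap.coe_comp', Function.comp_apply,
    ContinuousLinearMap.proj_apply, ContinuousLinearMap.coe_fst',
    ContinuousLinearMap.coe_snd', ContinuousLinearMap.sum_apply, smul_eq_mul]
  refine Finset.sum_congr rfl fun i _ => ?_
  rw [sub_mul, Finset.sum_mul]
  congr 1
  · ring
  · exact Finset.sum_congr rfl fun j _ => by ring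

lemma Qfun_eq {W : Fin l → Fin m → ℝ} {q : Fin m → ℝ} (x : Fin n → ℝ) (ξ : Xi l n) :
    Qfun W q x ξ = ⨆ lam ∈ polyD W q, ((Lclm x lam ξ : ℝ) : EReal) := by
  simp only [Qfun, Lclm_apply]

lemma Lclm_le_Qfun {W : Fin l → Fin m → ℝ} {q : Fin m → ℝ} {x : Fin n → ℝ} {ξ : Xi l n}
    {lam : Fin l → ℝ} (h : lam ∈ polyD W q) :
    ((Lclm x lam ξ : ℝ) : EReal) ≤ Qfun W q x ξ := by
  rw [Qfun_eq]
  exact le_iSup₂ (f := fun lam _ => ((Lclm x lam ξ : ℝ) : EReal)) lam h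

lemma Qfun_le {W : Fin l → Fin m → ℝ} {q : Fin m → ℝ} {x : Fin n → ℝ} {ξ : Xi l n}
    {c : EReal} (h : ∀ lam ∈ polyD W q, ((Lclm x lam ξ : ℝ) : EReal) ≤ c) :
    Qfun W q x ξ ≤ c := by
  rw [Qfun_eq]; exact iSup₂_le h

lemma Qfun_ne_bot {W : Fin l → Fin m → ℝ} {q : Fin m → ℝ} (hD : (polyD W q).Nonempty)
    (x : Fin n → ℝ) (ξ : Xi l n) : Qfun W q x ξ ≠ ⊥ := by
  obtain ⟨lam, hlam⟩ := hD
  intro h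
  have := Lclm_le_Qfun (x := x) (ξ := ξ) hlam
  rw [h, le_bot_iff] at this
  exact EReal.coe_ne_bot _ this

lemma coe_sum {α : Type*} (s : Finset α) (f : α → ℝ) :
    ((∑ a ∈ s, f a : ℝ) : EReal) = ∑ a ∈ s, ((f a : ℝ) : EReal) := by
  induction s using Finset.cons_induction with
  | empty => simp
  | cons a s ha ih => rw [Finset.sum_cons, Finset.sum_cons, EReal.coe_add, ih]

lemma sum_ne_bot {α : Type*} {s : Finset α} {f : α → EReal} (h : ∀ a ∈ s, f a ≠ ⊥) :
    ∑ a ∈ s, f a ≠ ⊥ := by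
  induction s using Finset.cons_induction with
  | empty => simp
  | cons a s ha ih =>
      rw [Finset.sum_cons]
      simp only [ne_eq, EReal.add_eq_bot_iff, not_or]
      exact ⟨h a (Finset.mem_cons_self a s), ih fun b hb => h b (Finset.mem_cons_of_mem hb)⟩

lemma mul_ne_bot_pos {c : ℝ} (hc : 0 < c) {x : EReal} (hx : x ≠ ⊥) : (c : EReal) * x ≠ ⊥ := by
  induction x using EReal.rec with
  | bot => exact absurd rfl hx
  | coe r => rw [← EReal.coe_mul]; exact EReal.coe_ne_bot _
  | top => rw [EReal.coe_mul_top_of_pos hc]; exact top_ne_bot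

section Meas
variable {Ω : Type*} [MeasurableSpace Ω] {W : Fin l → Fin m → ℝ} {q : Fin m → ℝ}
  {ℙ : Measure Ω} [IsProbabilityMeasure ℙ] {ξ : Ω → Xi l n}

lemma diff_null {A B : Set Ω} (hB : MeasurableSet B) (h : ℙ (A ∩ B) = ℙ A) :
    ℙ (A \ B) = 0 := by
  have h2 : ℙ (A ∩ B) + ℙ (A \ B) = ℙ A := measure_inter_add_diff A hB
  rw [h] at h2
  have h3 : ℙ A + ℙ (A \ B) = ℙ A + 0 := by simpa using h2
  exact (ENNReal.add_right_inj (measure_ne_top ℙ A)).mp h3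

lemma jensen_term (hD : (polyD W q).Nonempty) (hξint : Integrable ξ ℙ)
    {y : Fin n → ℝ}
    (hae : ∀ᵐ ω ∂ℙ, Qfun W q y (ξ ω) ≠ ⊤)
    (hint : Integrable (fun ω => (Qfun W q y (ξ ω)).toReal) ℙ) (P : Set (Xi l n)) :
    (if 0 < ℙ (ξ ⁻¹' P) then
        ((ℙ (ξ ⁻¹' P)).toReal : EReal) * Qfun W q y (condMean ℙ ξ P) else 0)
      ≤ ((∫ ω in ξ ⁻¹' P, (Qfun W q y (ξ ω)).toReal ∂ℙ : ℝ) : EReal) := by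
  set A := ξ ⁻¹' P with hA
  by_cases hApos : 0 < ℙ A
  · rw [if_pos hApos]
    set c := (ℙ A).toReal with hc
    have hcpos : 0 < c := ENNReal.toReal_pos hApos.ne' (measure_ne_top ℙ A)
    have key : Qfun W q y (condMean ℙ ξ P) ≤
        ((c⁻¹ * ∫ ω in A, (Qfun W q y (ξ ω)).toReal ∂ℙ : ℝ) : EReal) := by
      apply Qfun_le
      intro lam hlam
      rw [EReal.coe_le_coe_iff]
      have h1 : Lclm y lam (condMean ℙ ξ P) = c⁻¹ * Lclm y lam (∫ ω in A, ξ ω ∂ℙ) := by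
        unfold condMean
        rw [_root_.map_smul, smul_eq_mul]
      have h2 : Lclm y lam (∫ ω in A, ξ ω ∂ℙ) = ∫ ω in A, Lclm y lam (ξ ω) ∂ℙ :=
        (ContinuousLinearMap.integral_comp_comm _ hξint.integrableOn).symm
      have h3 : ∫ ω in A, Lclm y lam (ξ ω) ∂ℙ ≤ ∫ ω in A, (Qfun W q y (ξ ω)).toReal ∂ℙ := by
        apply setIntegral_mono_ae_restrict
          ((Lclm y lam).integrable_comp hξint).integrableOn hint.integrableOn
        filter_upwards [ae_restrict_of_ae hae] with ω hω
        have hle := Lclm_le_Qfun (x := y) (ξ := ξ ω) hlam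
        have := EReal.toReal_le_toReal hle (EReal.coe_ne_bot _) hω
        simpa using this
      rw [h1, h2]
      exact mul_le_mul_of_nonneg_left h3 (inv_nonneg.mpr hcpos.le)
    calc (c : EReal) * Qfun W q y (condMean ℙ ξ P)
        ≤ (c : EReal) * ((c⁻¹ * ∫ ω in A, (Qfun W q y (ξ ω)).toReal ∂ℙ : ℝ) : EReal) :=
          mul_le_mul_of_nonneg_left key (by exact_mod_cast hcpos.le)
      _ = ((c * (c⁻¹ * ∫ ω in A, (Qfun W q y (ξ ω)).toReal ∂ℙ) : ℝ) : EReal) :=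
          (EReal.coe_mul _ _).symm
      _ = ((∫ ω in A, (Qfun W q y (ξ ω)).toReal ∂ℙ : ℝ) : EReal) := by
          rw [mul_inv_cancel_left₀ hcpos.ne']
  · rw [if_neg hApos]
    have h0 : ℙ A = 0 := by simpa using hApos
    rw [Measure.restrict_eq_zero.mpr h0, integral_zero_measure]
    simp

lemma Vpart_le_Vtrue (hD : (polyD W q).Nonempty) (hξmeas : Measurable ξ)
    (hξint : Integrable ξ ℙ) {Ps : Finset (Set (Xi l n))} (hPs : IsFinPartition Ps)
    (y : Fin n → ℝ) : Vpart W q ℙ ξ Ps y ≤ Vtrue W q ℙ ξ y := by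
  unfold Vtrue
  split_ifs with h
  · obtain ⟨hae, hint⟩ := h
    have hu : (⋃ P ∈ Ps, ξ ⁻¹' P) = Set.univ := by
      rw [← Set.preimage_iUnion₂]
      have h2 : (⋃ P ∈ Ps, P) = Set.univ := by
        rw [← hPs.2.2, Set.sUnion_eq_biUnion]
        simp
      rw [h2, Set.preimage_univ]
    have hdisj : (↑Ps : Set (Set (Xi l n))).PairwiseDisjoint (fun P => ξ ⁻¹' P) :=
      fun P hP P' hP' hne => (hPs.2.1 hP hP' hne).preimage ξ
    have cover : ∫ ω, (Qfun W q y (ξ ω)).toReal ∂ℙ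
        = ∑ P ∈ Ps, ∫ ω in ξ ⁻¹' P, (Qfun W q y (ξ ω)).toReal ∂ℙ := by
      rw [← setIntegral_univ, ← hu]
      exact integral_biUnion_finset Ps (fun P hP => hξmeas (hPs.1 P hP)) hdisj
        (fun P hP => hint.integrableOn)
    rw [cover, coe_sum]
    exact Finset.sum_le_sum fun P _ => jensen_term hD hξint hae hint P
  · exact le_top


lemma preimage_partition_univ (hξmeas : Measurable ξ) {Ps : Finset (Set (Xi l n))}
    (hPs : IsFinPartition Ps) : (⋃ P ∈ Ps, ξ ⁻¹' P) = Set.univ := by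
  rw [← Set.preimage_iUnion₂]
  have h2 : (⋃ P ∈ Ps, P) = Set.univ := by
    rw [← hPs.2.2, Set.sUnion_eq_biUnion]; simp
  rw [h2, Set.preimage_univ]

lemma Vpart_refine_le (hD : (polyD W q).Nonempty) (hξmeas : Measurable ξ)
    (hξint : Integrable ξ ℙ) {Ps Rs : Finset (Set (Xi l n))}
    (hPs : IsFinPartition Ps) (hRs : IsFinPartition Rs)
    (href : PRefines ℙ ξ Ps Rs) (y : Fin n → ℝ) :
    Vpart W q ℙ ξ Rs y ≤ Vpart W q ℙ ξ Ps y := by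
  classical
  set t : Set (Xi l n) → EReal := fun P =>
    if 0 < ℙ (ξ ⁻¹' P) then ((ℙ (ξ ⁻¹' P)).toReal : EReal) * Qfun W q y (condMean ℙ ξ P)
    else 0 with ht
  have hVeq : ∀ S : Finset (Set (Xi l n)), Vpart W q ℙ ξ S y = ∑ P ∈ S, t P :=
    fun S => rfl
  set f : Set (Xi l n) → Set (Xi l n) :=
    fun P => if h : P ∈ Ps then (href P h).choose else ∅ with hf
  have hfRs : ∀ P ∈ Ps, f P ∈ Rs := by
    intro P h; simp only [hf, dif_pos h]; exact (href P h).choose_spec.1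
  have hfP : ∀ P ∈ Ps, ℙ (ξ ⁻¹' (P ∩ f P)) = ℙ (ξ ⁻¹' P) := by
    intro P h; simp only [hf, dif_pos h]; exact (href P h).choose_spec.2
  rw [hVeq Ps, hVeq Rs, ← Finset.sum_fiberwise_of_maps_to hfRs t]
  apply Finset.sum_le_sum
  intro R hR
  set F := Ps.filter (fun P => f P = R) with hF
  have fact1 : ∀ P ∈ F, ℙ (ξ ⁻¹' P ∩ ξ ⁻¹' R) = ℙ (ξ ⁻¹' P) := by
    intro P hP
    have hPF := Finset.mem_filter.mp hP
    rw [← Set.preimage_inter, ← hPF.2]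
    exact hfP P hPF.1
  have fact2 : ∀ P ∈ Ps, P ∉ F → ℙ (ξ ⁻¹' P ∩ ξ ⁻¹' R) = 0 := by
    intro P hP hPF
    have hne : f P ≠ R := fun h => hPF (Finset.mem_filter.mpr ⟨hP, h⟩)
    have hdisj : Disjoint (f P) R := hRs.2.1 (hfRs P hP) hR hne
    have hnull : ℙ (ξ ⁻¹' P \ ξ ⁻¹' (f P)) = 0 := by
      apply diff_null (hξmeas (hRs.1 _ (hfRs P hP)))
      rw [← Set.preimage_inter]; exact hfP P hP
    apply measure_mono_null _ hnull
    intro ω hω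
    exact ⟨hω.1, fun h' => (Set.disjoint_left.mp hdisj h' hω.2).elim⟩
  have hARmeas : MeasurableSet (ξ ⁻¹' R) := hξmeas (hRs.1 R hR)
  have hdisj' : (↑Ps : Set (Set (Xi l n))).PairwiseDisjoint
      (fun P => ξ ⁻¹' P ∩ ξ ⁻¹' R) := fun a ha b hb hne =>
    Disjoint.mono Set.inter_subset_left Set.inter_subset_left
      ((hPs.2.1 ha hb hne).preimage ξ)
  have hsplit : ξ ⁻¹' R = ⋃ P ∈ Ps, (ξ ⁻¹' P ∩ ξ ⁻¹' R) := by
    rw [← Set.iUnion₂_inter, preimage_partition_univ hξmeas hPs, Set.univ_inter]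
  have fact3 : ℙ (ξ ⁻¹' R) = ∑ P ∈ F, ℙ (ξ ⁻¹' P) := by
    rw [hsplit, measure_biUnion_finset hdisj'
      (fun P hP => (hξmeas (hPs.1 P hP)).inter hARmeas)]
    rw [← Finset.sum_subset (Finset.filter_subset _ _)
      (fun P hP hPF => fact2 P hP hPF)]
    exact Finset.sum_congr rfl fact1
  have fact4 : ∫ ω in ξ ⁻¹' R, ξ ω ∂ℙ = ∑ P ∈ F, ∫ ω in ξ ⁻¹' P, ξ ω ∂ℙ := by
    rw [hsplit, integral_biUnion_finset Ps
      (fun P hP => (hξmeas (hPs.1 P hP)).inter hARmeas) hdisj'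
      (fun P hP => hξint.integrableOn)]
    rw [← Finset.sum_subset (Finset.filter_subset _ _) (fun P hP hPF => by
      rw [Measure.restrict_eq_zero.mpr (fact2 P hP hPF), integral_zero_measure])]
    refine Finset.sum_congr rfl fun P hP => ?_
    apply setIntegral_congr_set
    rw [MeasureTheory.ae_eq_set]
    constructor
    · have hemp : (ξ ⁻¹' P ∩ ξ ⁻¹' R) \ ξ ⁻¹' P = ∅ := by
        ext ω; simp only [Set.mem_diff, Set.mem_inter_iff, Set.mem_empty_iff_false,
          iff_false, not_and]; tauto
      rw [hemp, measure_empty]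
    · rw [Set.diff_self_inter]
      exact diff_null hARmeas (fact1 P hP)
  by_cases hAR : 0 < ℙ (ξ ⁻¹' R)
  · have hcR : 0 < (ℙ (ξ ⁻¹' R)).toReal :=
      ENNReal.toReal_pos hAR.ne' (measure_ne_top ℙ _)
    by_cases htop : ∃ P ∈ F, 0 < ℙ (ξ ⁻¹' P) ∧ Qfun W q y (condMean ℙ ξ P) = ⊤
    · obtain ⟨P0, hP0F, hP0pos, hP0top⟩ := htop
      have hsum : ∑ P ∈ F, t P = ⊤ := by
        rw [← Finset.add_sum_erase _ _ hP0F]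
        have ht0 : t P0 = ⊤ := by
          rw [ht]; simp only
          rw [if_pos hP0pos, hP0top, EReal.coe_mul_top_of_pos
            (ENNReal.toReal_pos hP0pos.ne' (measure_ne_top ℙ _))]
        rw [ht0, EReal.top_add_of_ne_bot]
        apply sum_ne_bot
        intro P hP
        rw [ht]; simp only
        split_ifs with h
        · exact mul_ne_bot_pos (ENNReal.toReal_pos h.ne' (measure_ne_top ℙ _))
            (Qfun_ne_bot hD _ _)
        · simp
      rw [hsum]; exact le_top
    · push_neg at htop
      set r : ℝ := ∑ P ∈ F, (ℙ (ξ ⁻¹' P)).toReal * (Qfun W q y (condMean ℙ ξ P)).toReal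
        with hrr
      have hRHS : ∑ P ∈ F, t P = (r : EReal) := by
        rw [hrr, coe_sum]
        refine Finset.sum_congr rfl fun P hP => ?_
        by_cases hp : 0 < ℙ (ξ ⁻¹' P)
        · rw [ht]; simp only
          rw [if_pos hp, EReal.coe_mul,
            EReal.coe_toReal (htop P hP hp) (Qfun_ne_bot hD _ _)]
        · have h0 : ℙ (ξ ⁻¹' P) = 0 := by simpa using hp
          rw [ht]; simp only
          rw [if_neg hp, h0]; simp
      have key : Qfun W q y (condMean ℙ ξ R) ≤
          (((ℙ (ξ ⁻¹' R)).toReal⁻¹ * r : ℝ) : EReal) := by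
        apply Qfun_le
        intro lam hlam
        rw [EReal.coe_le_coe_iff]
        have h1 : Lclm y lam (condMean ℙ ξ R)
            = (ℙ (ξ ⁻¹' R)).toReal⁻¹ * Lclm y lam (∫ ω in ξ ⁻¹' R, ξ ω ∂ℙ) := by
          unfold condMean; rw [_root_.map_smul, smul_eq_mul]
        have h2 : Lclm y lam (∫ ω in ξ ⁻¹' R, ξ ω ∂ℙ)
            = ∑ P ∈ F, Lclm y lam (∫ ω in ξ ⁻¹' P, ξ ω ∂ℙ) := by
          rw [fact4, map_sum]
        have h3 : ∀ P ∈ F, Lclm y lam (∫ ω in ξ ⁻¹' P, ξ ω ∂ℙ)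
            ≤ (ℙ (ξ ⁻¹' P)).toReal * (Qfun W q y (condMean ℙ ξ P)).toReal := by
          intro P hP
          by_cases hp : 0 < ℙ (ξ ⁻¹' P)
          · have hcp : 0 < (ℙ (ξ ⁻¹' P)).toReal :=
              ENNReal.toReal_pos hp.ne' (measure_ne_top ℙ _)
            have hInt : ∫ ω in ξ ⁻¹' P, ξ ω ∂ℙ
                = (ℙ (ξ ⁻¹' P)).toReal • condMean ℙ ξ P := by
              unfold condMean; rw [smul_smul, mul_inv_cancel₀ hcp.ne', one_smul]
            rw [hInt, _root_.map_smul, smul_eq_mul]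
            apply mul_le_mul_of_nonneg_left _ hcp.le
            have hle := Lclm_le_Qfun (x := y) (ξ := condMean ℙ ξ P) hlam
            have := EReal.toReal_le_toReal hle (EReal.coe_ne_bot _) (htop P hP hp)
            simpa using this
          · have h0 : ℙ (ξ ⁻¹' P) = 0 := by simpa using hp
            rw [Measure.restrict_eq_zero.mpr h0, integral_zero_measure, map_zero, h0]
            simp
        rw [h1, h2, hrr]
        exact mul_le_mul_of_nonneg_left (Finset.sum_le_sum h3) (inv_nonneg.mpr hcR.le)
      rw [hRHS]
      have hLHS : t R = ((ℙ (ξ ⁻¹' R)).toReal : EReal) * Qfun W q y (condMean ℙ ξ R) := by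
        rw [ht]; simp only; rw [if_pos hAR]
      rw [hLHS]
      calc ((ℙ (ξ ⁻¹' R)).toReal : EReal) * Qfun W q y (condMean ℙ ξ R)
          ≤ ((ℙ (ξ ⁻¹' R)).toReal : EReal)
            * (((ℙ (ξ ⁻¹' R)).toReal⁻¹ * r : ℝ) : EReal) :=
            mul_le_mul_of_nonneg_left key (by exact_mod_cast hcR.le)
        _ = ((r : ℝ) : EReal) := by rw [← EReal.coe_mul, mul_inv_cancel_left₀ hcR.ne']
  · have hz : ∀ P ∈ F, t P = 0 := by
      intro P hP
      have h0 : ℙ (ξ ⁻¹' P) = 0 := by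
        have hle : ℙ (ξ ⁻¹' P) ≤ ℙ (ξ ⁻¹' R) := by
          rw [← fact1 P hP]; exact measure_mono Set.inter_subset_right
        have : ℙ (ξ ⁻¹' R) = 0 := by simpa using hAR
        simpa [this] using hle
      rw [ht]; simp [h0]
    rw [Finset.sum_eq_zero hz]
    rw [ht]; simp [hAR]

end Meas
end SubAux

/-- Lemma 8, inclusions: if `Ps` ℙ-refines `Rs` and `Rs` is adapted
to `x` (`V_Rs(x) = V(x)`), then `∂V_Rs(x) ⊆ ∂V_Ps(x) ⊆ ∂V(x)`. -/
theorem subdifferential_inclusions_of_adapted_refinement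
    {Ω : Type*} [MeasurableSpace Ω] {l n m : ℕ}
    (hl : 0 < l) (hn : 0 < n) (hm : 0 < m)
    (W : Fin l → Fin m → ℝ) (q : Fin m → ℝ) (hD : (polyD W q).Nonempty)
    (ℙ : Measure Ω) [IsProbabilityMeasure ℙ]
    (ξ : Ω → Xi l n) (hξmeas : Measurable ξ) (hξint : Integrable ξ ℙ)
    (x : Fin n → ℝ)
    (hQint : (∀ᵐ ω ∂ℙ, Qfun W q x (ξ ω) ≠ ⊤) ∧
      Integrable (fun ω => (Qfun W q x (ξ ω)).toReal) ℙ)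
    (Ps Rs : Finset (Set (Xi l n)))
    (hPs : IsFinPartition Ps) (hRs : IsFinPartition Rs)
    (href : PRefines ℙ ξ Ps Rs)
    (hadapt : Vpart W q ℙ ξ Rs x = Vtrue W q ℙ ξ x) :
    SubDiff (Vpart W q ℙ ξ Rs) x ⊆ SubDiff (Vpart W q ℙ ξ Ps) x ∧
      SubDiff (Vpart W q ℙ ξ Ps) x ⊆ SubDiff (Vtrue W q ℙ ξ) x := by
  classical
  have hPV : ∀ y, Vpart W q ℙ ξ Ps y ≤ Vtrue W q ℙ ξ y :=
    fun y => SubAux.Vpart_le_Vtrue hD hξmeas hξint hPs y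
  have hRP : ∀ y, Vpart W q ℙ ξ Rs y ≤ Vpart W q ℙ ξ Ps y :=
    fun y => SubAux.Vpart_refine_le hD hξmeas hξint hPs hRs href y
  have hPx : Vpart W q ℙ ξ Ps x = Vtrue W q ℙ ξ x :=
    le_antisymm (hPV x) (hadapt ▸ hRP x)
  constructor
  · intro g hg
    simp only [SubDiff, Set.mem_setOf_eq] at hg ⊢
    intro y
    calc Vpart W q ℙ ξ Ps x + ((∑ i, g i * (y i - x i) : ℝ) : EReal)
        = Vpart W q ℙ ξ Rs x + ((∑ i, g i * (y i - x i) : ℝ) : EReal) := by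
          rw [hPx, hadapt]
      _ ≤ Vpart W q ℙ ξ Rs y := hg y
      _ ≤ Vpart W q ℙ ξ Ps y := hRP y
  · intro g hg
    simp only [SubDiff, Set.mem_setOf_eq] at hg ⊢
    intro y
    calc Vtrue W q ℙ ξ x + ((∑ i, g i * (y i - x i) : ℝ) : EReal)
        = Vpart W q ℙ ξ Ps x + ((∑ i, g i * (y i - x i) : ℝ) : EReal) := by rw [hPx]
      _ ≤ Vpart W q ℙ ξ Ps y := hg y
      _ ≤ Vtrue W q ℙ ξ y := hPV y


end
end
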